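/- Let $r, t, u$ be smooth functions of $(z_2,\bar z_2)$ near $0 \in \mathbb{C}$ with $r$ real-valued and positive, satisfying: (a) $t_{\bar 2} = \tfrac14 r^2$, (b) $r r_{2\bar 2} - |r_2|^2 - \tfrac14 r^4 = 0$, (c) $u_{\bar 2} = \tfrac{r}{2}\bar u$, and let $v$ be a smooth complex-valued function with (d) $(\mathrm{Re}\,v)_{2\bar 2} = \tfrac{r}{8}|u|^2$. Set $s(z_1,z_2,\bar z_2) := t z_1^2 + u z_1 + v$ and $F := r|z_1|^2 + s + \bar s$. Then $F$ satisfies the complex Monge–Ampère equation $F_{1\bar 1}F_{2\bar 2} - |F_{1\bar 2}|^2 = 0$, and $F_{1\bar 1} = r > 0$ everywhere. -/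

import Mathlib

open Complex

/-- Wirtinger derivative `∂/∂z` of a function `f : ℂ → ℂ` (viewed as a smooth map `ℝ² → ℂ`). -/
noncomputable def wd (f : ℂ → ℂ) (z : ℂ) : ℂ :=
  (1 / 2 : ℂ) * (fderiv ℝ f z 1 - Complex.I * fderiv ℝ f z Complex.I)

/-- Wirtinger derivative `∂/∂z̄` of a function `f : ℂ → ℂ`. -/
noncomputable def wdb (f : ℂ → ℂ) (z : ℂ) : ℂ :=
  (1 / 2 : ℂ) * (fderiv ℝ f z 1 + Complex.I * fderiv ℝ f z Complex.I)

/-- Partial Wirtinger derivative `∂/∂z₁` of `f : ℂ → ℂ → ℂ`. -/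
noncomputable def wd1 (f : ℂ → ℂ → ℂ) (z1 z2 : ℂ) : ℂ := wd (fun w => f w z2) z1

/-- Partial Wirtinger derivative `∂/∂z̄₁` of `f : ℂ → ℂ → ℂ`. -/
noncomputable def wd1b (f : ℂ → ℂ → ℂ) (z1 z2 : ℂ) : ℂ := wdb (fun w => f w z2) z1

/-- Partial Wirtinger derivative `∂/∂z₂` of `f : ℂ → ℂ → ℂ`. -/
noncomputable def wd2 (f : ℂ → ℂ → ℂ) (z1 z2 : ℂ) : ℂ := wd (fun w => f z1 w) z2

/-- Partial Wirtinger derivative `∂/∂z̄₂` of `f : ℂ → ℂ → ℂ`. -/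
noncomputable def wd2b (f : ℂ → ℂ → ℂ) (z1 z2 : ℂ) : ℂ := wdb (fun w => f z1 w) z2

section Toolkit

open ComplexConjugate

/-- The ℝ-linear map `v ↦ p v + q v̄`. -/
noncomputable def LM (p q : ℂ) : ℂ →L[ℝ] ℂ :=
  p • (ContinuousLinearMap.id ℝ ℂ) + q • (conjCLE : ℂ ≃L[ℝ] ℂ).toContinuousLinearMap

@[simp] lemma LM_apply (p q v : ℂ) : LM p q v = p * v + q * conj v := by
  simp [LM, smul_eq_mul]

/-- `f` has Wirtinger derivatives `p`, `q` at `z`. -/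
def HasWAt (f : ℂ → ℂ) (z p q : ℂ) : Prop := HasFDerivAt f (LM p q) z

lemma conj_re_im (v : ℂ) : conj v = (v.re : ℂ) - v.im * I := by
  simp [Complex.ext_iff]

lemma LM_eq_iff {L : ℂ →L[ℝ] ℂ} {p q : ℂ} (h1 : L 1 = p + q) (hI : L I = p * I - q * I) :
    L = LM p q := by
  ext v
  have hv : v = (v.re : ℝ) • (1 : ℂ) + (v.im : ℝ) • I := by
    simp [real_smul, Complex.re_add_im]
  rw [hv, map_add, map_smul, map_smul, h1, hI, LM_apply]
  rw [show ((v.re : ℝ) • (1:ℂ) + (v.im : ℝ) • I) = (v.re : ℂ) + v.im * I by simp [real_smul],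
    conj_re_im]
  simp only [conj_ofReal, map_add, map_mul, real_smul]
  simp [Complex.ext_iff]
  constructor <;> ring

lemma HasWAt.wd_eq {f : ℂ → ℂ} {z p q : ℂ} (h : HasWAt f z p q) : wd f z = p := by
  unfold wd; rw [h.fderiv]
  simp only [LM_apply, map_one, mul_one, conj_I]
  linear_combination (-(p - q)/2) * Complex.I_sq

lemma HasWAt.wdb_eq {f : ℂ → ℂ} {z p q : ℂ} (h : HasWAt f z p q) : wdb f z = q := by
  unfold wdb; rw [h.fderiv]
  simp only [LM_apply, map_one, mul_one, conj_I]
  linear_combination ((p - q)/2) * Complex.I_sq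

variable {f g : ℂ → ℂ} {z p q p' q' c : ℂ}

lemma hasWAt_const (c z : ℂ) : HasWAt (fun _ => c) z 0 0 := by
  have : LM 0 0 = 0 := by ext v; simp
  unfold HasWAt; rw [this]; exact hasFDerivAt_const c z

lemma hasWAt_id (z : ℂ) : HasWAt (fun w => w) z 1 0 := by
  have : LM 1 0 = ContinuousLinearMap.id ℝ ℂ := by ext v; simp
  unfold HasWAt; rw [this]; exact hasFDerivAt_id z

lemma hasWAt_conj (z : ℂ) : HasWAt (fun w => conj w) z 0 1 := by
  have : LM 0 1 = (conjCLE : ℂ ≃L[ℝ] ℂ).toContinuousLinearMap := by ext v; simp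
  unfold HasWAt; rw [this]
  exact (conjCLE : ℂ ≃L[ℝ] ℂ).toContinuousLinearMap.hasFDerivAt

lemma HasWAt.add (hf : HasWAt f z p q) (hg : HasWAt g z p' q') :
    HasWAt (fun w => f w + g w) z (p + p') (q + q') := by
  have : LM (p + p') (q + q') = LM p q + LM p' q' := by ext v; simp; ring
  unfold HasWAt; rw [this]; exact HasFDerivAt.add hf hg

lemma HasWAt.mul (hf : HasWAt f z p q) (hg : HasWAt g z p' q') :
    HasWAt (fun w => f w * g w) z (p * g z + f z * p') (q * g z + f z * q') := by
  have h := HasFDerivAt.mul hf hg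
  have : f z • LM p' q' + g z • LM p q = LM (p * g z + f z * p') (q * g z + f z * q') := by
    ext v; simp [smul_eq_mul]; ring
  unfold HasWAt; rw [← this]; exact h

lemma HasWAt.const_mul (c : ℂ) (hf : HasWAt f z p q) :
    HasWAt (fun w => c * f w) z (c * p) (c * q) := by
  have := (hasWAt_const c z).mul hf
  simpa using this

lemma HasWAt.mul_const (hf : HasWAt f z p q) (c : ℂ) :
    HasWAt (fun w => f w * c) z (p * c) (q * c) := by
  have := hf.mul (hasWAt_const c z)
  simpa using this

lemma HasWAt.div_const (hf : HasWAt f z p q) (c : ℂ) :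
    HasWAt (fun w => f w / c) z (p / c) (q / c) := by
  simp only [div_eq_mul_inv]
  exact hf.mul_const c⁻¹

lemma HasWAt.conj_comp (hf : HasWAt f z p q) :
    HasWAt (fun w => conj (f w)) z (conj q) (conj p) := by
  have h := ((conjCLE : ℂ ≃L[ℝ] ℂ).toContinuousLinearMap.hasFDerivAt (x := f z)).comp z hf
  have : (conjCLE : ℂ ≃L[ℝ] ℂ).toContinuousLinearMap.comp (LM p q)
      = LM (conj q) (conj p) := by
    ext v; simp [map_add, map_mul]; ring
  unfold HasWAt; rw [← this]; exact h

lemma hasWAt_of_differentiableAt (hf : DifferentiableAt ℝ f z) :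
    HasWAt f z (wd f z) (wdb f z) := by
  unfold HasWAt
  have h := hf.hasFDerivAt
  have : fderiv ℝ f z = LM (wd f z) (wdb f z) := by
    apply LM_eq_iff
    · unfold wd wdb; linear_combination
    · unfold wd wdb
      linear_combination (fderiv ℝ f z I) * Complex.I_sq
  rwa [this] at h

lemma wd_congr {f g : ℂ → ℂ} {z : ℂ} (h : f =ᶠ[nhds z] g) : wd f z = wd g z := by
  unfold wd; rw [h.fderiv_eq]

lemma wdb_congr {f g : ℂ → ℂ} {z : ℂ} (h : f =ᶠ[nhds z] g) : wdb f z = wdb g z := by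
  unfold wdb; rw [h.fderiv_eq]

lemma wd_conj_comp (f : ℂ → ℂ) (z : ℂ) : wd (fun w => conj (f w)) z = conj (wdb f z) := by
  have h : fderiv ℝ (fun w => conj (f w)) z
      = (conjCLE : ℂ ≃L[ℝ] ℂ).toContinuousLinearMap.comp (fderiv ℝ f z) := by
    have := (conjCLE : ℂ ≃L[ℝ] ℂ).comp_fderiv (f := f) (x := z)
    exact this
  unfold wd wdb
  rw [h]
  simp only [ContinuousLinearMap.comp_apply, ContinuousLinearEquiv.coe_coe,
    conjCLE_apply, map_add, map_sub, map_mul, map_one, map_div₀, map_ofNat, conj_I]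
  ring

lemma wdb_conj_comp (f : ℂ → ℂ) (z : ℂ) : wdb (fun w => conj (f w)) z = conj (wd f z) := by
  have h : fderiv ℝ (fun w => conj (f w)) z
      = (conjCLE : ℂ ≃L[ℝ] ℂ).toContinuousLinearMap.comp (fderiv ℝ f z) := by
    have := (conjCLE : ℂ ≃L[ℝ] ℂ).comp_fderiv (f := f) (x := z)
    exact this
  unfold wd wdb
  rw [h]
  simp only [ContinuousLinearMap.comp_apply, ContinuousLinearEquiv.coe_coe,
    conjCLE_apply, map_add, map_sub, map_mul, map_one, map_div₀, map_ofNat, conj_I]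
  ring

lemma wd_wdb_key {U : Set ℂ} (hU : IsOpen U) {f : ℂ → ℂ} (hf : ContDiffOn ℝ (⊤ : ℕ∞) f U)
    {z : ℂ} (hz : z ∈ U) :
    DifferentiableAt ℝ (wd f) z ∧ DifferentiableAt ℝ (wdb f) z ∧
      wdb (wd f) z = wd (wdb f) z := by
  have hfz : ContDiffAt ℝ (⊤ : ℕ∞) f z := hf.contDiffAt (hU.mem_nhds hz)
  have hD : DifferentiableAt ℝ (fderiv ℝ f) z :=
    (hfz.fderiv_right (m := 1) (WithTop.coe_le_coe.mpr le_top)).differentiableAt one_ne_zero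
  set G := fderiv ℝ (fderiv ℝ f) z with hGdef
  have happ : ∀ c : ℂ, HasFDerivAt (fun w => fderiv ℝ f w c)
      ((ContinuousLinearMap.apply ℝ ℂ c).comp G) z := fun c =>
    ((ContinuousLinearMap.apply ℝ ℂ c).hasFDerivAt).comp z hD.hasFDerivAt
  have hwd : HasFDerivAt (wd f)
      ((1/2 : ℂ) • (((ContinuousLinearMap.apply ℝ ℂ 1).comp G)
        - I • ((ContinuousLinearMap.apply ℝ ℂ I).comp G))) z := by
    exact (((happ 1).sub ((happ I).const_mul I)).const_mul (1/2 : ℂ))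
  have hwdb : HasFDerivAt (wdb f)
      ((1/2 : ℂ) • (((ContinuousLinearMap.apply ℝ ℂ 1).comp G)
        + I • ((ContinuousLinearMap.apply ℝ ℂ I).comp G))) z := by
    exact (((happ 1).add ((happ I).const_mul I)).const_mul (1/2 : ℂ))
  have hG1I : G 1 I = G I 1 := (hfz.isSymmSndFDerivAt (by simp [minSmoothness_of_isRCLikeNormedField]; exact WithTop.coe_le_coe.mpr le_top)) 1 I
  refine ⟨hwd.differentiableAt, hwdb.differentiableAt, ?_⟩
  show (1/2:ℂ) * (fderiv ℝ (wd f) z 1 + I * fderiv ℝ (wd f) z I)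
      = (1/2:ℂ) * (fderiv ℝ (wdb f) z 1 - I * fderiv ℝ (wdb f) z I)
  rw [hwd.fderiv, hwdb.fderiv]
  simp only [ContinuousLinearMap.smul_apply, ContinuousLinearMap.sub_apply,
    ContinuousLinearMap.add_apply, ContinuousLinearMap.comp_apply,
    ContinuousLinearMap.apply_apply, smul_eq_mul]
  rw [hG1I]
  ring

end Toolkit

open ComplexConjugate

/-- converse direction of the main theorem: conditions (a)–(d) imply the
complex Monge–Ampère equation for `F = r|z₁|² + s + s̄`, `s = t z₁² + u z₁ + v`,
and `F_{1 1̄} = r > 0`. -/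
theorem stmt10 (U : Set ℂ) (hU : IsOpen U) (h0 : (0 : ℂ) ∈ U)
    (r : ℂ → ℝ) (t u v : ℂ → ℂ)
    (hr : ContDiffOn ℝ (⊤ : ℕ∞) (fun z => (r z : ℂ)) U)
    (hpos : ∀ z ∈ U, 0 < r z)
    (ht : ContDiffOn ℝ (⊤ : ℕ∞) t U) (hu : ContDiffOn ℝ (⊤ : ℕ∞) u U) (hv : ContDiffOn ℝ (⊤ : ℕ∞) v U)
    (ha : ∀ z ∈ U, wdb t z = (1 / 4 : ℂ) * (r z : ℂ) ^ 2)
    (hb : ∀ z ∈ U,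
      (r z : ℂ) * wdb (wd (fun w => (r w : ℂ))) z
        - (Complex.normSq (wd (fun w => (r w : ℂ)) z) : ℂ)
        - (1 / 4 : ℂ) * (r z : ℂ) ^ 4 = 0)
    (hc : ∀ z ∈ U, wdb u z = (r z : ℂ) / 2 * starRingEnd ℂ (u z))
    (hd : ∀ z ∈ U,
      wdb (wd (fun w => (((v w).re : ℝ) : ℂ))) z
        = (r z : ℂ) / 8 * (Complex.normSq (u z) : ℂ))
    (F : ℂ → ℂ → ℂ)
    (hF : ∀ z1 z2 : ℂ,
      F z1 z2 = (r z2 : ℂ) * (Complex.normSq z1 : ℂ)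
        + (t z2 * z1 ^ 2 + u z2 * z1 + v z2)
        + starRingEnd ℂ (t z2 * z1 ^ 2 + u z2 * z1 + v z2)) :
    ∀ z1 : ℂ, ∀ z2 ∈ U,
      (wd1b (wd1 F) z1 z2 * wd2b (wd2 F) z1 z2
        - (Complex.normSq (wd2b (wd1 F) z1 z2) : ℂ) = 0) ∧
      wd1b (wd1 F) z1 z2 = (r z2 : ℂ) ∧ 0 < r z2 := by
  intro z1 z2 hz2
  have hdAt : ∀ (g : ℂ → ℂ), ContDiffOn ℝ (⊤ : ℕ∞) g U → ∀ w ∈ U, DifferentiableAt ℝ g w := by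
    intro g hg w hw
    exact (hg.contDiffAt (hU.mem_nhds hw)).differentiableAt (by simp)
  have hdr := hdAt _ hr
  have hdt := hdAt _ ht
  have hdu := hdAt _ hu
  have hdv := hdAt _ hv
  -- Step (i): first Wirtinger derivative in z₁
  have h_wd1 : ∀ a b : ℂ, wd1 F a b = (r b : ℂ) * conj a + t b * (2 * a) + u b := by
    intro a b
    have hfun : (fun w => F w b) = (fun w =>
        (r b : ℂ) * (w * conj w) + (t b * (w * w) + u b * w + v b)
          + (conj (t b) * (conj w * conj w) + conj (u b) * conj w + conj (v b))) := by
      funext w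
      rw [hF, ← Complex.mul_conj]
      simp only [map_add, map_mul, map_pow]
      ring
    unfold wd1
    rw [hfun]
    exact (((HasWAt.const_mul _ ((hasWAt_id a).mul (hasWAt_conj a))).add
        (((HasWAt.const_mul _ ((hasWAt_id a).mul (hasWAt_id a))).add
          (HasWAt.const_mul _ (hasWAt_id a))).add (hasWAt_const _ a))).add
        (((HasWAt.const_mul _ ((hasWAt_conj a).mul (hasWAt_conj a))).add
          (HasWAt.const_mul _ (hasWAt_conj a))).add (hasWAt_const _ a))).wd_eq.trans
      (by ring)
  -- Step (ii): F₁₁̄ = r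
  have hF11 : wd1b (wd1 F) z1 z2 = (r z2 : ℂ) := by
    unfold wd1b
    have hfun : (fun w => wd1 F w z2) = (fun w =>
        (r z2 : ℂ) * conj w + t z2 * (2 * w) + u z2) := funext fun w => h_wd1 w z2
    rw [hfun]
    exact (((HasWAt.const_mul _ (hasWAt_conj z1)).add
        (HasWAt.const_mul _ (HasWAt.const_mul _ (hasWAt_id z1)))).add
        (hasWAt_const _ z1)).wdb_eq.trans (by ring)
  have Hrc := hasWAt_of_differentiableAt (hdr z2 hz2)
  have Ht2 := hasWAt_of_differentiableAt (hdt z2 hz2)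
  have Hu2 := hasWAt_of_differentiableAt (hdu z2 hz2)
  have hρb : wdb (fun w => (r w : ℂ)) z2 = conj (wd (fun w => (r w : ℂ)) z2) := by
    conv_lhs => rw [show (fun w => ((r w : ℝ) : ℂ)) = (fun w => conj ((r w : ℝ) : ℂ)) by
      funext w; rw [conj_ofReal]]
    exact wdb_conj_comp _ z2
  -- Step (iii): F₁₂̄
  have hF12 : wd2b (wd1 F) z1 z2
      = conj (wd (fun w => (r w : ℂ)) z2) * conj z1 + (r z2 : ℂ) ^ 2 / 2 * z1
        + (r z2 : ℂ) / 2 * conj (u z2) := by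
    unfold wd2b
    have hfun : (fun w => wd1 F z1 w) = (fun w =>
        (r w : ℂ) * conj z1 + t w * (2 * z1) + u w) := funext fun w => h_wd1 z1 w
    rw [hfun]
    refine ((((Hrc.mul_const (conj z1)).add (Ht2.mul_const (2 * z1))).add Hu2).wdb_eq).trans ?_
    rw [hρb, ha z2 hz2, hc z2 hz2]
    ring
  -- Step (iv): first Wirtinger derivative in z₂ (valid on U)
  have h_wd2 : ∀ w ∈ U, wd2 F z1 w
      = wd (fun y => (r y : ℂ)) w * (Complex.normSq z1 : ℂ)
        + (wd t w * z1 ^ 2 + wd u w * z1 + wd v w)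
        + (conj (wdb t w) * conj z1 ^ 2 + conj (wdb u w) * conj z1 + conj (wdb v w)) := by
    intro w hw
    have hfun : (fun y => F z1 y) = (fun y =>
        (r y : ℂ) * (Complex.normSq z1 : ℂ) + (t y * z1 ^ 2 + u y * z1 + v y)
          + (conj (t y) * conj z1 ^ 2 + conj (u y) * conj z1 + conj (v y))) := by
      funext y
      rw [hF]
      simp only [map_add, map_mul, map_pow]
    unfold wd2
    rw [hfun]
    exact ((((hasWAt_of_differentiableAt (hdr w hw)).mul_const _).add
        ((((hasWAt_of_differentiableAt (hdt w hw)).mul_const _).add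
          ((hasWAt_of_differentiableAt (hdu w hw)).mul_const _)).add
          (hasWAt_of_differentiableAt (hdv w hw)))).add
        (((((hasWAt_of_differentiableAt (hdt w hw)).conj_comp).mul_const _).add
          (((hasWAt_of_differentiableAt (hdu w hw)).conj_comp).mul_const _)).add
          ((hasWAt_of_differentiableAt (hdv w hw)).conj_comp))).wd_eq.trans (by ring)
  -- second-derivative data
  have Krc := wd_wdb_key hU hr hz2
  have Kt := wd_wdb_key hU ht hz2
  have Ku := wd_wdb_key hU hu hz2
  have Kv := wd_wdb_key hU hv hz2
  have hcv : ContDiffOn ℝ (⊤ : ℕ∞) (fun y => conj (v y)) U := by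
    have h1 : (fun y => conj (v y))
        = ⇑(conjCLE : ℂ ≃L[ℝ] ℂ).toContinuousLinearMap ∘ v := by
      funext y; simp
    rw [h1]
    exact (conjCLE : ℂ ≃L[ℝ] ℂ).toContinuousLinearMap.contDiff.comp_contDiffOn hv
  have Kcv := wd_wdb_key hU hcv hz2
  have hRev : ContDiffOn ℝ (⊤ : ℕ∞) (fun w => (((v w).re : ℝ) : ℂ)) U := by
    have h1 : (fun w => (((v w).re : ℝ) : ℂ)) = (⇑ofRealCLM ∘ ⇑reCLM) ∘ v := by
      funext y; simp
    rw [h1]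
    exact (ofRealCLM.contDiff.comp reCLM.contDiff).comp_contDiffOn hv
  have KRev := wd_wdb_key hU hRev hz2
  -- evaluation of the second derivatives of t
  have hBt : wd (wdb t) z2 = (r z2 : ℂ) * wd (fun w => (r w : ℂ)) z2 / 2 := by
    have e1 : wdb t =ᶠ[nhds z2] (fun w => (1/4 : ℂ) * ((r w : ℂ) * (r w : ℂ))) := by
      filter_upwards [hU.mem_nhds hz2] with w hw
      rw [ha w hw]; ring
    rw [wd_congr e1]
    exact (HasWAt.const_mul (1/4 : ℂ) (Hrc.mul Hrc)).wd_eq.trans (by ring)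
  have hBt' : wdb (wd t) z2 = (r z2 : ℂ) * wd (fun w => (r w : ℂ)) z2 / 2 :=
    Kt.2.2.trans hBt
  have hBtc : conj (wd (wdb t) z2)
      = (r z2 : ℂ) * conj (wd (fun w => (r w : ℂ)) z2) / 2 := by
    rw [hBt]
    simp only [map_div₀, map_mul, conj_ofReal, map_ofNat]
  -- evaluation of the second derivatives of u
  have hCu : wd (wdb u) z2 = wd (fun w => (r w : ℂ)) z2 / 2 * conj (u z2)
      + (r z2 : ℂ) / 2 * ((r z2 : ℂ) / 2 * u z2) := by
    have e2 : wdb u =ᶠ[nhds z2] (fun w => (r w : ℂ) / 2 * conj (u w)) := by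
      filter_upwards [hU.mem_nhds hz2] with w hw
      exact hc w hw
    rw [wd_congr e2]
    refine (((Hrc.div_const 2).mul (Hu2.conj_comp)).wd_eq).trans ?_
    rw [hc z2 hz2]
    simp only [map_mul, map_div₀, conj_ofReal, conj_conj, map_ofNat]
  have hCu' : wdb (wd u) z2 = wd (fun w => (r w : ℂ)) z2 / 2 * conj (u z2)
      + (r z2 : ℂ) / 2 * ((r z2 : ℂ) / 2 * u z2) := Ku.2.2.trans hCu
  have hCuc : conj (wd (wdb u) z2) = conj (wd (fun w => (r w : ℂ)) z2) / 2 * u z2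
      + (r z2 : ℂ) / 2 * ((r z2 : ℂ) / 2 * conj (u z2)) := by
    rw [hCu]
    simp only [map_add, map_mul, map_div₀, conj_ofReal, conj_conj, map_ofNat]
  -- evaluation of the v-terms
  have hDsum : wdb (wd v) z2 + conj (wd (wdb v) z2)
      = (r z2 : ℂ) / 4 * (Complex.normSq (u z2) : ℂ) := by
    have h1 : conj (wd (wdb v) z2) = wdb (wd (fun y => conj (v y))) z2 :=
      (wdb_conj_comp (wdb v) z2).symm.trans
        (congrArg (fun g => wdb g z2) (funext fun w => (wd_conj_comp v w).symm))
    have h2 : wdb (wd v) z2 + wdb (wd (fun y => conj (v y))) z2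
        = wdb (fun w => wd v w + wd (fun y => conj (v y)) w) z2 :=
      (((hasWAt_of_differentiableAt Kv.1).add
        (hasWAt_of_differentiableAt Kcv.1)).wdb_eq).symm
    have e3 : (fun w => wd v w + wd (fun y => conj (v y)) w)
        =ᶠ[nhds z2] (fun w => (2 : ℂ) * wd (fun y => (((v y).re : ℝ) : ℂ)) w) := by
      filter_upwards [hU.mem_nhds hz2] with w hw
      have hv1 := hasWAt_of_differentiableAt (hdv w hw)
      have step1 : wd v w + wd (fun y => conj (v y)) w
          = wd (fun y => v y + conj (v y)) w := by
        rw [(hv1.add hv1.conj_comp).wd_eq, wd_conj_comp]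
      have step2 : (fun y => v y + conj (v y))
          = (fun y => (2 : ℂ) * (((v y).re : ℝ) : ℂ)) := by
        funext y
        rw [Complex.add_conj]
        push_cast
        ring
      rw [step1, step2,
        (HasWAt.const_mul (2 : ℂ)
          (hasWAt_of_differentiableAt (hdAt _ hRev w hw))).wd_eq]
    have h3 : wdb (fun w => (2 : ℂ) * wd (fun y => (((v y).re : ℝ) : ℂ)) w) z2
        = 2 * wdb (wd (fun y => (((v y).re : ℝ) : ℂ))) z2 :=
      (HasWAt.const_mul (2 : ℂ) (hasWAt_of_differentiableAt KRev.1)).wdb_eq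
    rw [h1, h2, wdb_congr e3, h3, hd z2 hz2]
    ring
  -- Step (v): F₂₂̄
  have hΦ : wd2b (wd2 F) z1 z2
      = wdb (wd (fun y => (r y : ℂ))) z2 * (Complex.normSq z1 : ℂ)
        + (wdb (wd t) z2 * z1 ^ 2 + wdb (wd u) z2 * z1 + wdb (wd v) z2)
        + (conj (wd (wdb t) z2) * conj z1 ^ 2 + conj (wd (wdb u) z2) * conj z1
            + conj (wd (wdb v) z2)) := by
    unfold wd2b
    have heq : (fun w => wd2 F z1 w) =ᶠ[nhds z2] (fun w =>
        wd (fun y => (r y : ℂ)) w * (Complex.normSq z1 : ℂ)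
          + (wd t w * z1 ^ 2 + wd u w * z1 + wd v w)
          + (conj (wdb t w) * conj z1 ^ 2 + conj (wdb u w) * conj z1
              + conj (wdb v w))) := by
      filter_upwards [hU.mem_nhds hz2] with w hw
      exact h_wd2 w hw
    rw [wdb_congr heq]
    exact ((((hasWAt_of_differentiableAt Krc.1).mul_const _).add
        ((((hasWAt_of_differentiableAt Kt.1).mul_const _).add
          ((hasWAt_of_differentiableAt Ku.1).mul_const _)).add
          (hasWAt_of_differentiableAt Kv.1))).add
        (((((hasWAt_of_differentiableAt Kt.2.1).conj_comp).mul_const _).add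
          (((hasWAt_of_differentiableAt Ku.2.1).conj_comp).mul_const _)).add
          ((hasWAt_of_differentiableAt Kv.2.1).conj_comp))).wdb_eq.trans (by ring)
  have hG3 : wd2b (wd2 F) z1 z2
      = wdb (wd (fun y => (r y : ℂ))) z2 * (Complex.normSq z1 : ℂ)
        + ((r z2 : ℂ) * wd (fun w => (r w : ℂ)) z2 / 2) * z1 ^ 2
        + ((r z2 : ℂ) * conj (wd (fun w => (r w : ℂ)) z2) / 2) * conj z1 ^ 2
        + (wd (fun w => (r w : ℂ)) z2 / 2 * conj (u z2)
            + (r z2 : ℂ) ^ 2 / 4 * u z2) * z1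
        + (conj (wd (fun w => (r w : ℂ)) z2) / 2 * u z2
            + (r z2 : ℂ) ^ 2 / 4 * conj (u z2)) * conj z1
        + (r z2 : ℂ) / 4 * (Complex.normSq (u z2) : ℂ) := by
    rw [hΦ, hBt', hCu', hBtc, hCuc]
    linear_combination hDsum
  refine ⟨?_, hF11, hpos z2 hz2⟩
  rw [hF11, hF12, hG3]
  have hbrel := hb z2 hz2
  rw [← Complex.mul_conj] at hbrel
  rw [← Complex.mul_conj, ← Complex.mul_conj, ← Complex.mul_conj]
  simp only [map_add, map_mul, map_div₀, map_pow, conj_conj, conj_ofReal, map_ofNat]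
  linear_combination (z1 * conj z1) * hbrel
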